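/- arXiv:2412.16308 — 2 statements merged into one kernel-verified Lean document; each statement's English description precedes it below -/
import Mathlib

section
/- Let K be an algebraically closed field, n ≥ 1, and let f be an irreducible Laurent polynomial in n variables over K such that there exists e ∈ ℤⁿ with m − m' ∈ ℤ·e for all m, m' ∈ supp(f). Then supp(f) has at most 2 elements, i.e. f is a monomial or a binomial. -/
/-!
Translating by the unit `x^m₀`, a Laurent polynomial whose support lies on a line `m₀ + ℤ•e`
becomes the image of a one-variable Laurent polynomial `g` under the ring map `T ↦ x^e`, which
is injective on exponents and so preserves the number of terms. Over an algebraically closed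
field, if `g` has at least three terms, some polynomial `T^k g` is not a monomial and hence has a
root `a ≠ 0`; then `g = (T - a) h`, and `h` has at least two terms because `g` has more than two.
Since `ℤⁿ` has the two-unique-sums property, units of its group algebra are monomials, so
`f = x^m₀ (x^e - a) · h(x^e)` is a product of two non-units.
-/

open scoped BigOperators

noncomputable section

/-- The ring of Laurent polynomials in variables indexed by `σ` over `K`,
realized as the monoid algebra `K[x₁^{±1},…]` on the exponent group `σ → ℤ`. -/
abbrev LaurentPoly (K : Type*) [CommSemiring K] (σ : Type*) : Type _ :=
  AddMonoidAlgebra K (σ → ℤ)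

variable {K : Type*} [Field K] {σ : Type*} [Fintype σ]

/-- `t ^ a = ∏ i, (t i) ^ (a i)` for a torus point `t ∈ (Kˣ)^σ` and `a ∈ ℤ^σ`. -/
def torusPow (t : σ → Kˣ) (a : σ → ℤ) : K :=
  ∏ i, ((t i ^ a i : Kˣ) : K)

/-- Evaluation of a Laurent polynomial `f = ∑ a α_a x^a` at a point `t` of the
torus: `f(t) = ∑ a α_a t^a`. -/
def laurentEval (f : LaurentPoly K σ) (t : σ → Kˣ) : K :=
  f.coeff.sum fun a c => c * torusPow t a

/-- The twist `t*f = ∑ a α_a t^a x^a` of a Laurent polynomial by a torus point. -/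
def laurentTwist (t : σ → Kˣ) (f : LaurentPoly K σ) : LaurentPoly K σ :=
  f.coeff.sum fun a c => AddMonoidAlgebra.single a (c * torusPow t a)

/-- The height of a (prime) ideal: the supremum of lengths of chains of prime
ideals strictly contained in it. -/
def idealHeight {R : Type*} [CommRing R] (P : Ideal R) : ℕ∞ :=
  Set.chainHeight {Q : Ideal R | Q.IsPrime ∧ Q < P} (· < ·)

/-- A family of Laurent polynomials meets properly if, for every subset `I` of
the index set, every minimal prime of the ideal generated by the corresponding
subfamily has height `#I`. -/
def MeetsProperly {k : ℕ} (g : Fin k → LaurentPoly K σ) : Prop :=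
  ∀ I : Finset (Fin k), ∀ P ∈ (Ideal.span (g '' ↑I)).minimalPrimes,
    idealHeight P = I.card

open Polynomial LaurentPolynomial Function Finset

namespace AddMonoidAlgebra

variable {R Γ : Type*} [Semiring R]

theorem card_support_coeff_mul_le [Add Γ] (x y : AddMonoidAlgebra R Γ) :
    #(x * y).coeff.support ≤ #x.coeff.support * #y.coeff.support := by
  classical
  exact (card_le_card (support_coeff_mul_subset x y)).trans card_add_le

theorem one_lt_card_support_coeff_mul [NoZeroDivisors R] [Add Γ] [TwoUniqueSums Γ]
    {x y : AddMonoidAlgebra R Γ} (h : 1 < #x.coeff.support * #y.coeff.support) :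
    1 < #(x * y).coeff.support := by
  obtain ⟨p, hp, q, hq, hpq, hup, huq⟩ := TwoUniqueSums.uniqueAdd_of_one_lt_card h
  have mem_support : ∀ {s : Γ × Γ}, s ∈ x.coeff.support ×ˢ y.coeff.support →
      UniqueAdd x.coeff.support y.coeff.support s.1 s.2 → s.1 + s.2 ∈ (x * y).coeff.support := by
    intro s hs hu
    rw [mem_product, Finsupp.mem_support_iff, Finsupp.mem_support_iff] at hs
    rw [Finsupp.mem_support_iff, coeff_mul_add_of_uniqueAdd hu]
    exact mul_ne_zero hs.1 hs.2
  refine one_lt_card.2 ⟨_, mem_support hp hup, _, mem_support hq huq, fun heq => hpq ?_⟩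
  obtain ⟨h₁, h₂⟩ := hup (mem_product.1 hq).1 (mem_product.1 hq).2 heq.symm
  exact (Prod.ext h₁ h₂).symm

theorem card_support_coeff_le_one_of_isUnit [NoZeroDivisors R] [AddMonoid Γ] [TwoUniqueSums Γ]
    {x : AddMonoidAlgebra R Γ} (hx : IsUnit x) : #x.coeff.support ≤ 1 := by
  obtain ⟨y, hxy⟩ := hx.exists_right_inv
  by_contra! hcard
  have hy : y.coeff.support.Nonempty := by
    rw [Finsupp.support_nonempty_iff, Ne, coeff_eq_zero]
    rintro rfl
    have : Subsingleton (AddMonoidAlgebra R Γ) := subsingleton_of_zero_eq_one (by simpa using hxy)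
    simp [Subsingleton.elim x 0] at hcard
  have h := one_lt_card_support_coeff_mul (x := x) (y := y) (by nlinarith [hy.card_pos])
  rw [hxy] at h
  exact h.not_ge ((card_le_card Finsupp.support_single_subset).trans (card_singleton _).le)

theorem card_support_coeff_mapDomain {M N : Type*} {f : M → N} (hf : Injective f)
    (x : AddMonoidAlgebra R M) : #(mapDomain f x).coeff.support = #x.coeff.support := by
  classical
  rw [coeff_mapDomain, Finsupp.mapDomain_support_of_injective hf, card_image_of_injective _ hf]

theorem card_support_coeff_single_mul [NoZeroDivisors R] [Add Γ] [IsLeftCancelAdd Γ] {r : R}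
    (hr : r ≠ 0) (a : Γ) (x : AddMonoidAlgebra R Γ) :
    #(single a r * x).coeff.support = #x.coeff.support := by
  rw [support_coeff_single_mul _ _ (fun _ => mul_eq_zero_iff_left hr), card_map]

theorem exists_eq_single_mul_mapDomain [AddCommGroup Γ] {M : Type*} {f : M → Γ} (hf : Injective f)
    (x : AddMonoidAlgebra R Γ) (m₀ : Γ) (hx : ∀ m ∈ x.coeff.support, m - m₀ ∈ Set.range f) :
    ∃ g : AddMonoidAlgebra R M, x = single m₀ 1 * mapDomain f g := by
  set y := single (-m₀) 1 * x
  have hy : ↑y.coeff.support ⊆ Set.range f := by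
    intro m hm
    rw [Finset.mem_coe, support_coeff_single_mul _ _ (by simp)] at hm
    obtain ⟨m', hm', rfl⟩ := Finset.mem_map.1 hm
    simpa [neg_add_eq_sub] using hx m' hm'
  refine ⟨comapDomain f hf y, ?_⟩
  rw [mapDomain_comapDomain hy, ← mul_assoc, single_mul_single, add_neg_cancel, one_mul,
    ← one_def, one_mul]

end AddMonoidAlgebra

theorem Polynomial.exists_isRoot_ne_zero_of_forall_ne_C_mul_X_pow [IsAlgClosed K] {q : K[X]}
    (hq : ∀ c n, q ≠ C c * X ^ n) : ∃ a, a ≠ 0 ∧ q.IsRoot a := by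
  have hq0 : q ≠ 0 := by simpa using hq 0 0
  obtain ⟨p, hqp, hndvd⟩ := q.exists_eq_pow_rootMultiplicity_mul_and_not_dvd hq0 0
  rw [C_0, sub_zero] at hqp hndvd
  have hp : p.degree ≠ 0 := fun h =>
    hq _ _ (hqp.trans ((congrArg _ (eq_C_of_degree_eq_zero h)).trans (mul_comm _ _)))
  obtain ⟨a, ha⟩ := IsAlgClosed.exists_root p hp
  refine ⟨a, ?_, ?_⟩
  · rintro rfl
    exact hndvd (by simpa using dvd_iff_isRoot.2 ha)
  · rw [hqp, IsRoot, eval_mul, ha.eq_zero, mul_zero]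

namespace LaurentPolynomial

theorem support_coeff_T_one_sub_C {a : K} (ha : a ≠ 0) :
    (T 1 - C a : K[T;T⁻¹]).coeff.support = {0, 1} := by
  ext m
  rw [T, ← single_eq_C]
  simp only [Finsupp.mem_support_iff, AddMonoidAlgebra.coeff_sub, AddMonoidAlgebra.coeff_single,
    Finsupp.sub_apply, Finsupp.single_apply, mem_insert, mem_singleton]
  grind

theorem exists_eq_mul_of_two_lt_card_support [IsAlgClosed K] {g : K[T;T⁻¹]}
    (hg : 2 < #g.coeff.support) :
    ∃ u v : K[T;T⁻¹], g = u * v ∧ 1 < #u.coeff.support ∧ 1 < #v.coeff.support := by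
  obtain ⟨k, q, hq⟩ := exists_T_pow g
  have hgq : g = toLaurent q * T (-k) := by rw [hq, mul_T_assoc, add_neg_cancel, T_zero, mul_one]
  obtain ⟨a, ha, hroot⟩ := q.exists_isRoot_ne_zero_of_forall_ne_C_mul_X_pow fun c j hqc => by
    have : #g.coeff.support ≤ 1 := by
      rw [hgq, hqc, toLaurent_C_mul_X_pow, mul_T_assoc]
      exact (card_le_card (support_C_mul_T _ _)).trans (card_singleton _).le
    omega
  obtain ⟨r, rfl⟩ := dvd_iff_isRoot.2 hroot
  have hu : #(T 1 - C a : K[T;T⁻¹]).coeff.support = 2 := by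
    rw [support_coeff_T_one_sub_C ha, card_pair zero_ne_one]
  have hguv : g = (T 1 - C a) * (toLaurent r * T (-k)) := by
    rw [hgq, map_mul, mul_assoc, map_sub, toLaurent_X, toLaurent_C]
  refine ⟨_, _, hguv, by omega, ?_⟩
  by_contra! hv
  have := AddMonoidAlgebra.card_support_coeff_mul_le (T 1 - C a) (toLaurent r * T (-k))
  rw [← hguv, hu] at this
  omega

end LaurentPolynomial

theorem AddMonoidAlgebra.card_support_le_two_of_irreducible_of_forall_sub_eq_zsmul {Γ : Type*}
    [IsAlgClosed K] [AddCommGroup Γ] [IsAddTorsionFree Γ] [TwoUniqueSums Γ]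
    {f : AddMonoidAlgebra K Γ} (hf : Irreducible f) {e : Γ}
    (hline : ∀ m ∈ f.coeff.support, ∀ m' ∈ f.coeff.support, ∃ c : ℤ, m - m' = c • e) :
    #f.coeff.support ≤ 2 := by
  by_contra! hf3
  obtain ⟨m₀, hm₀⟩ := card_pos.1 (by omega : 0 < #f.coeff.support)
  have he : e ≠ 0 := by
    rintro rfl
    have : #f.coeff.support ≤ 1 := card_le_one.2 fun m hm m' hm' => by
      simpa [sub_eq_zero] using hline m hm m' hm'
    omega
  have hinj : Injective (· • e : ℤ → Γ) := smul_left_injective ℤ he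
  obtain ⟨g, rfl⟩ := exists_eq_single_mul_mapDomain hinj f m₀
    fun m hm => (hline m hm m₀ hm₀).imp fun c hc => hc.symm
  rw [card_support_coeff_single_mul one_ne_zero, card_support_coeff_mapDomain hinj] at hf3
  obtain ⟨u, v, rfl, hu, hv⟩ := LaurentPolynomial.exists_eq_mul_of_two_lt_card_support hf3
  have hmul : mapDomain (· • e) (u * v) = mapDomain (· • e) u * mapDomain (· • e) v :=
    map_mul (mapDomainRingHom K (zmultiplesHom Γ e)) u v
  rw [hmul, ← mul_assoc] at hf
  rcases hf.isUnit_or_isUnit rfl with h | h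
  · refine (card_support_coeff_le_one_of_isUnit h).not_gt ?_
    rwa [card_support_coeff_single_mul one_ne_zero, card_support_coeff_mapDomain hinj]
  · refine (card_support_coeff_le_one_of_isUnit h).not_gt ?_
    rwa [card_support_coeff_mapDomain hinj]

theorem irreducible_support_on_line_card_le_two_general
    (K : Type*) [Field K] [IsAlgClosed K] (n : ℕ)
    (f : LaurentPoly K (Fin n)) (hf : Irreducible f)
    (e : Fin n → ℤ)
    (hline : ∀ m ∈ f.coeff.support, ∀ m' ∈ f.coeff.support, ∃ c : ℤ, m - m' = c • e) :
    f.coeff.support.card ≤ 2 :=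
  AddMonoidAlgebra.card_support_le_two_of_irreducible_of_forall_sub_eq_zsmul hf hline

/-- Over an algebraically closed field, an irreducible Laurent
polynomial whose support has all its differences lying on a single line `ℤ·e`
is a monomial or a binomial. -/
theorem irreducible_support_on_line_card_le_two
    (K : Type*) [Field K] [IsAlgClosed K] (n : ℕ) (hn : 1 ≤ n)
    (f : LaurentPoly K (Fin n)) (hf : Irreducible f)
    (e : Fin n → ℤ)
    (hline : ∀ m ∈ f.coeff.support, ∀ m' ∈ f.coeff.support, ∃ c : ℤ, m - m' = c • e) :
    f.coeff.support.card ≤ 2 :=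
  irreducible_support_on_line_card_le_two_general K n f hf e hline
end
end

section
/- Let n ≥ 1 and let h₁,…,h_s and g₁,…,g_r be Laurent polynomials in n variables over ℂ such that every common zero of h₁,…,h_s in (ℂˣ)ⁿ is a common zero of g₁,…,g_r. Then for every compact subset C ⊂ (ℂˣ)ⁿ there exist a positive integer κ and a real constant c > 0 such that for all z ∈ C: max_{1≤j≤s} |h_j(z)| ≥ c · ( max_{1≤i≤r} |g_i(z)| )^{κ}. -/
/-!
Lift each Laurent polynomial to `K[x, y]` by writing `y_i` for `x_i⁻¹`, so that the torus
becomes the zero set of the relations `x_i y_i - 1`. By the Nullstellensatz, the lifts of the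
`g_i` lie in the radical of the ideal generated by the lifts of the `h_j` and these relations,
so on the torus `g_i^κ = ∑_j a_ij h_j` with one exponent `κ` and polynomial coefficients `a_ij`.
The `a_ij` are continuous, hence bounded on the compact set `C`, which bounds `|g_i|^κ` by a
constant multiple of `max_j |h_j|` there.
-/

open scoped BigOperators

noncomputable section

variable {K : Type*} [Field K] {σ : Type*} [Fintype σ]

open MvPolynomial

def torusPt {M ι : Type*} [Monoid M] (t : ι → Mˣ) : ι ⊕ ι → M :=
  Sum.elim (fun i => t i) (fun i => ↑(t i)⁻¹)

def torusRelation {R ι : Type*} [CommRing R] (i : ι) : MvPolynomial (ι ⊕ ι) R :=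
  X (.inl i) * X (.inr i) - 1

lemma eval_torusPt_torusRelation {R ι : Type*} [CommRing R] (t : ι → Rˣ) (i : ι) :
    eval (torusPt t) (torusRelation i) = 0 := by
  simp [torusRelation, torusPt]

lemma exists_torusPt_eq {R ι : Type*} [CommRing R] {x : ι ⊕ ι → R}
    (hx : ∀ i, eval x (torusRelation i) = 0) : ∃ t : ι → Rˣ, torusPt t = x := by
  have hunit (i : ι) : x (.inl i) * x (.inr i) = 1 := by
    simpa [torusRelation, sub_eq_zero] using hx i
  refine ⟨fun i => Units.mkOfMulEqOne _ _ (hunit i), funext fun j => ?_⟩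
  cases j <;> rfl

lemma continuous_torusPt {M ι : Type*} [Monoid M] [TopologicalSpace M] :
    Continuous (torusPt : (ι → Mˣ) → ι ⊕ ι → M) := by
  refine continuous_pi fun j => ?_
  cases j with
  | inl i => exact Units.continuous_val.comp (continuous_apply i)
  | inr i => exact Units.continuous_coe_inv.comp (continuous_apply i)

lemma continuous_eval_torusPt {R ι : Type*} [CommRing R] [TopologicalSpace R]
    [IsTopologicalRing R] (p : MvPolynomial (ι ⊕ ι) R) :
    Continuous fun t : ι → Rˣ => eval (torusPt t) p :=
  (continuous_eval p).comp continuous_torusPt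

lemma units_zpow_eq_pow_toNat_mul (u : Kˣ) (m : ℤ) :
    ((u ^ m : Kˣ) : K) = (u : K) ^ m.toNat * ((u⁻¹ : Kˣ) : K) ^ (-m).toNat := by
  rw [← Units.val_pow_eq_pow_val, ← Units.val_pow_eq_pow_val, ← Units.val_mul, inv_pow,
    ← zpow_natCast, ← zpow_natCast, ← zpow_neg, ← zpow_add]
  congr 2
  omega

def laurentLift (f : LaurentPoly K σ) : MvPolynomial (σ ⊕ σ) K :=
  f.coeff.sum fun a c => C c * ∏ i, X (.inl i) ^ (a i).toNat * X (.inr i) ^ (-a i).toNat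

lemma eval_torusPt_laurentLift (f : LaurentPoly K σ) (t : σ → Kˣ) :
    eval (torusPt t) (laurentLift f) = laurentEval f t := by
  simp only [laurentLift, laurentEval, torusPow, Finsupp.sum, map_sum, map_mul, eval_C,
    map_prod, map_pow, eval_X, torusPt, Sum.elim_inl, Sum.elim_inr, units_zpow_eq_pow_toNat_mul]

/-- The zero locus of this ideal in `K^{σ ⊕ σ}` is the image under `torusPt` of the common
zero set of the `h j` on the torus. -/
def torusIdeal {ι : Type*} (h : ι → LaurentPoly K σ) : Ideal (MvPolynomial (σ ⊕ σ) K) :=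
  Ideal.span (Set.range (Sum.elim (laurentLift ∘ h) torusRelation))

theorem laurentLift_mem_radical_torusIdeal [IsAlgClosed K] {ι : Type*}
    (h : ι → LaurentPoly K σ) {f : LaurentPoly K σ}
    (hf : ∀ t, (∀ j, laurentEval (h j) t = 0) → laurentEval f t = 0) :
    laurentLift f ∈ (torusIdeal h).radical := by
  rw [← vanishingIdeal_zeroLocus_eq_radical (K := K)]
  intro x hx
  have hvanish (p) (hp : p ∈ torusIdeal h) : eval x p = 0 := hx p hp
  obtain ⟨t, rfl⟩ := exists_torusPt_eq fun i => hvanish _ (Ideal.subset_span ⟨.inr i, rfl⟩)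
  change eval (torusPt t) (laurentLift f) = 0
  rw [eval_torusPt_laurentLift]
  refine hf t fun j => ?_
  rw [← eval_torusPt_laurentLift]
  exact hvanish _ (Ideal.subset_span ⟨.inl j, rfl⟩)

theorem exists_eval_torusPt_eq_sum_of_mem_torusIdeal {ι : Type*} [Fintype ι]
    {h : ι → LaurentPoly K σ} {p : MvPolynomial (σ ⊕ σ) K} (hp : p ∈ torusIdeal h) :
    ∃ a : ι → MvPolynomial (σ ⊕ σ) K, ∀ t,
      eval (torusPt t) p = ∑ j, eval (torusPt t) (a j) * laurentEval (h j) t := by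
  obtain ⟨c, rfl⟩ := Ideal.mem_span_range_iff_exists_fun.1 hp
  refine ⟨fun j => c (.inl j), fun t => ?_⟩
  simp [Fintype.sum_sum_type, eval_torusPt_laurentLift, eval_torusPt_torusRelation]

theorem Ideal.exists_pos_pow_mem_of_forall_mem_radical {R ι : Type*} [CommSemiring R]
    [Finite ι] {I : Ideal R} {p : ι → R} (hp : ∀ i, p i ∈ I.radical) :
    ∃ κ, 0 < κ ∧ ∀ i, p i ^ κ ∈ I := by
  obtain ⟨k, hk⟩ := Ideal.exists_pow_le_of_le_radical_of_fg
    (Ideal.span_le.2 (Set.range_subset_iff.2 hp)) (Submodule.fg_span (Set.finite_range p))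
  exact ⟨k + 1, k.succ_pos, fun i => hk <| Ideal.pow_le_pow_right k.le_succ <|
    Ideal.pow_mem_pow (Ideal.subset_span (Set.mem_range_self i)) _⟩

theorem exists_pow_laurentEval_eq_sum_mul [IsAlgClosed K] {ι ι' : Type*} [Fintype ι]
    [Finite ι'] (h : ι → LaurentPoly K σ) (g : ι' → LaurentPoly K σ)
    (hzeros : ∀ t, (∀ j, laurentEval (h j) t = 0) → ∀ i, laurentEval (g i) t = 0) :
    ∃ κ, 0 < κ ∧ ∃ a : ι' → ι → MvPolynomial (σ ⊕ σ) K, ∀ t i,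
      laurentEval (g i) t ^ κ = ∑ j, eval (torusPt t) (a i j) * laurentEval (h j) t := by
  obtain ⟨κ, hκ, hmem⟩ := Ideal.exists_pos_pow_mem_of_forall_mem_radical fun i =>
    laurentLift_mem_radical_torusIdeal h fun t ht => hzeros t ht i
  choose a ha using fun i => exists_eval_torusPt_eq_sum_of_mem_torusIdeal (hmem i)
  exact ⟨κ, hκ, a, fun t i => by rw [← ha, map_pow, eval_torusPt_laurentLift]⟩

lemma norm_sum_mul_le_card_mul {R ι : Type*} [SeminormedRing R] [Fintype ι] (a f : ι → R) :
    ‖∑ j, a j * f j‖ ≤ Fintype.card ι * (‖a‖ * ‖f‖) := by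
  calc ‖∑ j, a j * f j‖ ≤ ∑ j, ‖a j * f j‖ := norm_sum_le _ _
    _ ≤ ∑ _j : ι, ‖a‖ * ‖f‖ := Finset.sum_le_sum fun j _ => (norm_mul_le _ _).trans <|
        mul_le_mul (norm_le_pi_norm a j) (norm_le_pi_norm f j) (norm_nonneg _) (norm_nonneg _)
    _ = Fintype.card ι * (‖a‖ * ‖f‖) := by simp

theorem IsCompact.exists_pos_forall_norm_sum_mul_le {X R ι ι' : Type*} [TopologicalSpace X]
    [SeminormedRing R] [Fintype ι] [Fintype ι'] {C : Set X} (hC : IsCompact C)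
    {a : X → ι' → ι → R} (ha : ContinuousOn a C) :
    ∃ A, 0 < A ∧ ∀ z ∈ C, ∀ i (f : ι → R), ‖∑ j, a z i j * f j‖ ≤ A * ‖f‖ := by
  obtain ⟨B, hB⟩ := hC.exists_bound_of_continuousOn ha
  refine ⟨Fintype.card ι * max B 0 + 1, by positivity, fun z hz i f => ?_⟩
  have haB : ‖a z i‖ ≤ max B 0 := (norm_le_pi_norm (a z) i).trans ((hB z hz).trans (le_max_left _ _))
  calc ‖∑ j, a z i j * f j‖ ≤ Fintype.card ι * (‖a z i‖ * ‖f‖) := norm_sum_mul_le_card_mul _ _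
    _ ≤ Fintype.card ι * (max B 0 * ‖f‖) := by gcongr
    _ ≤ (Fintype.card ι * max B 0 + 1) * ‖f‖ := by nlinarith [norm_nonneg f]

theorem Finset.sup'_univ_norm_eq_pi_norm {E ι : Type*} [SeminormedAddGroup E] [Fintype ι]
    (f : ι → E) (hne : (Finset.univ : Finset ι).Nonempty) :
    Finset.univ.sup' hne (fun i => ‖f i‖) = ‖f‖ := by
  obtain ⟨i₀, hi₀⟩ := hne
  refine le_antisymm (Finset.sup'_le _ _ fun i _ => norm_le_pi_norm f i) ?_
  refine (pi_norm_le_iff_of_nonneg ((norm_nonneg (f i₀)).trans (Finset.le_sup' (fun i => ‖f i‖) hi₀))).2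
    fun i => Finset.le_sup' (fun i => ‖f i‖) (Finset.mem_univ i)

theorem max_abs_comparison_of_zero_set_inclusion_general
    (n : ℕ) (s r : ℕ) (hs : 0 < s) (hr : 0 < r)
    (h : Fin s → LaurentPoly ℂ (Fin n)) (g : Fin r → LaurentPoly ℂ (Fin n))
    (hzeros : ∀ z : Fin n → ℂˣ,
      (∀ j, laurentEval (h j) z = 0) → ∀ i, laurentEval (g i) z = 0) :
    ∀ C : Set (Fin n → ℂˣ), IsCompact C →
      ∃ (κ : ℕ) (c : ℝ), 0 < κ ∧ 0 < c ∧ ∀ z ∈ C,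
        c * ((Finset.univ.sup' (Finset.univ_nonempty_iff.mpr
              (Fin.pos_iff_nonempty.mp hr))
            fun i => ‖laurentEval (g i) z‖) ^ κ) ≤
          Finset.univ.sup' (Finset.univ_nonempty_iff.mpr
              (Fin.pos_iff_nonempty.mp hs))
            fun j => ‖laurentEval (h j) z‖ := by
  intro C hC
  obtain ⟨κ, hκ, a, hpow⟩ := exists_pow_laurentEval_eq_sum_mul h g hzeros
  obtain ⟨A, hA, hbound⟩ := hC.exists_pos_forall_norm_sum_mul_le
    (a := fun z i j => eval (torusPt z) (a i j))
    (continuous_pi fun i => continuous_pi fun j => continuous_eval_torusPt _).continuousOn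
  refine ⟨κ, A⁻¹, hκ, inv_pos.2 hA, fun z hz => ?_⟩
  obtain ⟨i, -, hi⟩ := Finset.exists_mem_eq_sup' _ fun i => ‖laurentEval (g i) z‖
  rw [inv_mul_le_iff₀ hA, hi, ← norm_pow, hpow, Finset.sup'_univ_norm_eq_pi_norm]
  exact hbound z hz i _

/-- If every common zero on the complex torus of the Laurent
polynomials `h₁,…,h_s` is a common zero of `g₁,…,g_r`, then on every compact
subset of the torus one has `max_j |h_j| ≥ c · (max_i |g_i|)^κ` for some
constants `κ ≥ 1` and `c > 0`. -/
theorem max_abs_comparison_of_zero_set_inclusion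
    (n : ℕ) (hn : 1 ≤ n) (s r : ℕ) (hs : 0 < s) (hr : 0 < r)
    (h : Fin s → LaurentPoly ℂ (Fin n)) (g : Fin r → LaurentPoly ℂ (Fin n))
    (hzeros : ∀ z : Fin n → ℂˣ,
      (∀ j, laurentEval (h j) z = 0) → ∀ i, laurentEval (g i) z = 0) :
    ∀ C : Set (Fin n → ℂˣ), IsCompact C →
      ∃ (κ : ℕ) (c : ℝ), 0 < κ ∧ 0 < c ∧ ∀ z ∈ C,
        c * ((Finset.univ.sup' (Finset.univ_nonempty_iff.mpr
              (Fin.pos_iff_nonempty.mp hr))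
            fun i => ‖laurentEval (g i) z‖) ^ κ) ≤
          Finset.univ.sup' (Finset.univ_nonempty_iff.mpr
              (Fin.pos_iff_nonempty.mp hs))
            fun j => ‖laurentEval (h j) z‖ :=
  max_abs_comparison_of_zero_set_inclusion_general n s r hs hr h g hzeros
end
end
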